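/- Let T > 0 and let f : ℝ → ℝ be a continuous function that is almost periodic (in the sense of Bohr) and whose restriction to [0,∞) is S-asymptotically T-periodic. Then f is T-periodic: f(t+T) = f(t) for all t ∈ ℝ. -/
import Mathlib


open Filter Set

/-- A continuous function `f : ℝ → ℝ` is almost periodic in the sense of Bohr if for every
`ε > 0` the set of `ε`-almost periods of `f` is relatively dense in `ℝ`. -/
def AlmostPeriodic (f : ℝ → ℝ) : Prop :=
  Continuous f ∧
    ∀ ε : ℝ, 0 < ε → ∃ l : ℝ, 0 < l ∧ ∀ a : ℝ,
      ∃ ξ ∈ Icc a (a + l), ∀ t : ℝ, |f (t + ξ) - f t| < ε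

/-- An almost periodic function which is S-asymptotically `T`-periodic on `[0,∞)`
is `T`-periodic. -/
theorem almost_periodic_and_s_asymp_is_periodic (T : ℝ) (hT : 0 < T)
    (f : ℝ → ℝ) (hap : AlmostPeriodic f)
    (hsap : Tendsto (fun t : ℝ => f (t + T) - f t) atTop (nhds 0)) :
    Function.Periodic f T := by
  intro t
  rw [← sub_eq_zero]
  by_contra hne
  set ε : ℝ := |f (t + T) - f t| with hε
  have hεpos : 0 < ε := abs_pos.mpr hne
  -- eventual smallness of the defect
  have hev : ∀ᶠ s in atTop, |f (s + T) - f s| < ε / 3 := by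
    have := Metric.tendsto_nhds.mp hsap (ε / 3) (by positivity)
    filter_upwards [this] with s hs
    simpa [Real.dist_eq] using hs
  obtain ⟨M, hM⟩ := eventually_atTop.mp hev
  -- almost period beyond M - t
  obtain ⟨l, hl, hdense⟩ := hap.2 (ε / 3) (by positivity)
  obtain ⟨ξ, hξmem, hξ⟩ := hdense (M - t)
  have hξge : M - t ≤ ξ := hξmem.1
  have h1 : |f (t + ξ) - f t| < ε / 3 := hξ t
  have h2 : |f (t + T + ξ) - f (t + T)| < ε / 3 := hξ (t + T)
  have h3 : |f ((t + ξ) + T) - f (t + ξ)| < ε / 3 := hM (t + ξ) (by linarith)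
  have key : f (t + T) - f t =
      (f (t + T) - f (t + T + ξ)) + (f ((t + ξ) + T) - f (t + ξ)) +
        (f (t + ξ) - f t) := by
    have : t + T + ξ = (t + ξ) + T := by ring
    rw [this]; ring
  have : ε < ε := by
    calc ε = |f (t + T) - f t| := hε
      _ ≤ |f (t + T) - f (t + T + ξ)| + |f ((t + ξ) + T) - f (t + ξ)| +
            |f (t + ξ) - f t| := by rw [key]; exact abs_add_three _ _ _
      _ < ε / 3 + ε / 3 + ε / 3 := by
          have h2' : |f (t + T) - f (t + T + ξ)| < ε / 3 := by
            rw [abs_sub_comm]; exact h2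
          linarith
      _ = ε := by ring
  exact lt_irrefl _ this
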